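/- Let f = m'(1+V_{i,bε}) where m' is a monomial (with no powers of t) satisfying u_{i,b}(m') = 1 and u_{i,c}(m') = 0 for c ≠ b. Then the bar involution satisfies \overline{f} = t^{2d(m',m')} f; in particular \overline{f} lies in the span K̂_{t,i}. -/

import Mathlib

open scoped BigOperators

/-- A monomial in the commuting variables `V_{i,a}`, `W_{i,a}` (`i ∈ I`, `a ∈ ℂ*`),
recorded by its finitely supported exponent functions. -/
@[ext] structure Mon (I : Type) where
  v : I × ℂ →₀ ℕ
  w : I × ℂ →₀ ℕ

/-- Product of monomials: exponents add. -/
noncomputable def Mon.mul {I : Type} (m₁ m₂ : Mon I) : Mon I := ⟨m₁.v + m₂.v, m₁.w + m₂.w⟩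

/-- `u_{i,a}(m) = w_{i,a}(m) − v_{i,aε⁻¹}(m) − v_{i,aε}(m) + Σ_{j : a_{ij} = −1} v_{j,a}(m)`. -/
noncomputable def uq {I : Type} [Fintype I] (A : I → I → ℤ) (ε : ℂ) (m : Mon I) (i : I) (a : ℂ) : ℤ :=
  (m.w (i, a) : ℤ) - (m.v (i, a * ε⁻¹) : ℤ) - (m.v (i, a * ε) : ℤ)
    + ∑ j : I, if A i j = -1 then (m.v (j, a) : ℤ) else 0

/-- `d(m¹,m²) = Σ_{i,a} ( v_{i,aε}(m¹) u_{i,a}(m²) + w_{i,aε}(m¹) v_{i,a}(m²) )`. -/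
noncomputable def dd {I : Type} [Fintype I] (A : I → I → ℤ) (ε : ℂ) (m₁ m₂ : Mon I) : ℤ :=
  ∑ᶠ p : I × ℂ, ((m₁.v (p.1, p.2 * ε) : ℤ) * uq A ε m₂ p.1 p.2
    + (m₁.w (p.1, p.2 * ε) : ℤ) * (m₂.v p : ℤ))
noncomputable instance {I : Type} : Mul (Mon I) := ⟨fun m₁ m₂ => ⟨m₁.v + m₂.v, m₁.w + m₂.w⟩⟩
instance {I : Type} : One (Mon I) := ⟨⟨0, 0⟩⟩

@[simp] lemma Mon.mul_v {I : Type} (m₁ m₂ : Mon I) : (m₁ * m₂).v = m₁.v + m₂.v := rfl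
@[simp] lemma Mon.mul_w {I : Type} (m₁ m₂ : Mon I) : (m₁ * m₂).w = m₁.w + m₂.w := rfl
@[simp] lemma Mon.one_v {I : Type} : (1 : Mon I).v = 0 := rfl
@[simp] lemma Mon.one_w {I : Type} : (1 : Mon I).w = 0 := rfl

noncomputable instance {I : Type} : CommMonoid (Mon I) where
  mul_assoc a b c := by ext : 1 <;> simp [add_assoc]
  one_mul a := by ext : 1 <;> simp
  mul_one a := by ext : 1 <;> simp
  mul_comm a b := by ext : 1 <;> simp [add_comm]

/-- The ring `ℤ[t,t⁻¹,V_{i,a},W_{i,a}]`, realized as the monoid algebra of `ℤ` over the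
commutative monoid of pairs (power of `t`, monomial in the `V`, `W` variables). -/
abbrev FRing (I : Type) := MonoidAlgebra ℤ (Multiplicative ℤ × Mon I)

/-- The basis element `t^k · m` of `ℤ[t,t⁻¹,V_{i,a},W_{i,a}]`. -/
noncomputable def mono {I : Type} (k : ℤ) (m : Mon I) : FRing I :=
  MonoidAlgebra.single (Multiplicative.ofAdd k, m) 1

/-- The twisted multiplication `m¹ ∗ m² = t^{2D(m¹,m²)} m¹ m²`, extended
`ℤ[t,t⁻¹]`-bilinearly, for a given function `D` on pairs of monomials. -/
noncomputable def starD {I : Type} (D : Mon I → Mon I → ℤ) (f g : FRing I) : FRing I :=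
  f.coeff.sum fun p c => g.coeff.sum fun q c' =>
    MonoidAlgebra.single (p.1 * q.1 * Multiplicative.ofAdd (2 * D p.2 q.2), p.2 * q.2) (c * c')
open LaurentPolynomial

/-- The balanced quantum integer `[k]_t = (t^k − t^{−k})/(t − t^{−1}) ∈ ℤ[t,t⁻¹]`,
written out as `t^{k-1} + t^{k-3} + ⋯ + t^{1-k}`. -/
noncomputable def qint (k : ℕ) : LaurentPolynomial ℤ :=
  ∑ j ∈ Finset.range k, T ((k : ℤ) - 1 - 2 * j)

/-- The balanced quantum factorial `[n]_t! = [n]_t [n-1]_t ⋯ [1]_t`. -/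
noncomputable def qfact : ℕ → LaurentPolynomial ℤ
  | 0 => 1
  | n + 1 => qfact n * qint (n + 1)

/-- The single-variable monomial `V_{i,c}`. -/
noncomputable def Vmon {I : Type} (i : I) (c : ℂ) : Mon I := ⟨Finsupp.single (i, c) 1, 0⟩

/-- The embedding of `ℤ[t,t⁻¹]` into `ℤ[t,t⁻¹,V_{i,a},W_{i,a}]`. -/
noncomputable def emb {I : Type} (P : LaurentPolynomial ℤ) : FRing I :=
  P.coeff.sum fun k c => MonoidAlgebra.single (Multiplicative.ofAdd k, (1 : Mon I)) c

/-- The `n`-fold twisted power `f^{∗n}` (with `f^{∗0} = 1`). -/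
noncomputable def starPow {I : Type} (D : Mon I → Mon I → ℤ) (f : FRing I) : ℕ → FRing I
  | 0 => 1
  | n + 1 => starD D f (starPow D f n)
/-- The element `E_i(m)` of `ℤ[t,t⁻¹,V_{i,a},W_{i,a}]`:
`E_i(m) = m ∏_a Σ_{r_a=0}^{u_{i,a}(m)} t^{r_a(u_{i,a}(m)−r_a)} [u_{i,a}(m) choose r_a]_t V_{i,aε}^{r_a}`,
where `S` is any finite set outside which `u_{i,a}(m) = 0` and `B` is the family of
balanced `t`-binomial coefficients. -/
noncomputable def Ei {I : Type} [Fintype I] (A : I → I → ℤ) (ε : ℂ)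
    (B : ℕ → ℕ → LaurentPolynomial ℤ) (i : I) (m : Mon I) (S : Finset ℂ) : FRing I :=
  mono 0 m * ∏ a ∈ S,
    ∑ r ∈ Finset.range ((uq A ε m i a).toNat + 1),
      emb (T ((r : ℤ) * (uq A ε m i a - (r : ℤ))) * B (uq A ε m i a).toNat r)
        * mono 0 (Vmon i (a * ε) ^ r)

/-- The `ℤ[t,t⁻¹]`-span `K̂_{t,i}` of the elements `E_i(m)`, `m` `i`-dominant. -/
noncomputable def Khat {I : Type} [Fintype I] (A : I → I → ℤ) (ε : ℂ)
    (B : ℕ → ℕ → LaurentPolynomial ℤ) (i : I) : Submodule ℤ (FRing I) :=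
  Submodule.span ℤ {x | ∃ (k : ℤ) (m : Mon I) (S : Finset ℂ),
    (∀ a : ℂ, 0 ≤ uq A ε m i a) ∧ (∀ a : ℂ, a ∉ S → uq A ε m i a = 0) ∧
    x = emb (T k) * Ei A ε B i m S}

/-- The bar involution on `ℤ[t,t⁻¹,V_{i,a},W_{i,a}]`: `t^k m ↦ t^{-k+2d(m,m)} m`. -/
noncomputable def barD {I : Type} (D : Mon I → Mon I → ℤ) (f : FRing I) : FRing I :=
  f.coeff.sum fun p c =>
    MonoidAlgebra.single (Multiplicative.ofAdd (-(Multiplicative.toAdd p.1) + 2 * D p.2 p.2), p.2) c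


section BarOfFAux
open Classical

lemma uq_mul {I : Type} [Fintype I] (A : I → I → ℤ) (ε : ℂ) (m₁ m₂ : Mon I) (j : I) (a : ℂ) :
    uq A ε (m₁ * m₂) j a = uq A ε m₁ j a + uq A ε m₂ j a := by
  have h : ∀ x : I, (if A j x = -1 then ((m₁.v (x,a) : ℤ) + (m₂.v (x,a) : ℤ)) else 0)
      = (if A j x = -1 then (m₁.v (x,a) : ℤ) else 0) + (if A j x = -1 then (m₂.v (x,a) : ℤ) else 0) :=
    fun x => by split_ifs <;> ring
  simp only [uq, Mon.mul_v, Mon.mul_w, Finsupp.add_apply, Nat.cast_add]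
  rw [Finset.sum_congr rfl fun x _ => h x, Finset.sum_add_distrib]
  ring

lemma uq_V {I : Type} [Fintype I] (A : I → I → ℤ) (ε : ℂ) (i : I) (b : ℂ) (p₁ : I) (p₂ : ℂ) :
    uq A ε (Vmon i (b*ε)) p₁ p₂ =
      -(if (i, b*ε) = (p₁, p₂ * ε⁻¹) then 1 else 0)
      - (if (i, b*ε) = (p₁, p₂ * ε) then 1 else 0)
      + ∑ j : I, if A p₁ j = -1 then (if (i, b*ε) = (j, p₂) then 1 else 0) else 0 := by
  simp only [uq, Vmon, Finsupp.single_apply, Finsupp.coe_zero, Pi.zero_apply, Nat.cast_zero,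
    Nat.cast_ite, Nat.cast_one]
  ring

lemma dd_key {I : Type} [Fintype I] (A : I → I → ℤ)
    (hsymm : ∀ i j, A i j = A j i) (hdiag : ∀ i, A i i = 2)
    (ε : ℂ) (hε : ε ≠ 0) (i : I) (b : ℂ) (m' : Mon I)
    (hm'1 : uq A ε m' i b = 1) (hm'0 : ∀ c : ℂ, c ≠ b → uq A ε m' i c = 0) :
    dd A ε (m' * Vmon i (b*ε)) (m' * Vmon i (b*ε)) = dd A ε m' m' := by
  set V := Vmon i (b*ε) with hVdef
  set M := m' * V with hMdef
  set T : Finset (I × ℂ) :=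
    (((m'.v.support ∪ m'.w.support).image (fun q : I × ℂ => (q.1, q.2 * ε⁻¹))
      ∪ {(i, b), (i, b*ε*ε)}) ∪ Finset.univ.image (fun j : I => (j, b*ε))) with hT
  have hmemT : ∀ j : I, (j, b*ε) ∈ T := fun j => by
    rw [hT]
    exact Finset.mem_union_right _ (Finset.mem_image.2 ⟨j, Finset.mem_univ j, rfl⟩)
  have hib : (i, b) ∈ T := by
    rw [hT]
    exact Finset.mem_union_left _ (Finset.mem_union_right _ (by simp))
  have hib2 : (i, b*ε*ε) ∈ T := by
    rw [hT]
    exact Finset.mem_union_left _ (Finset.mem_union_right _ (by simp))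
  have hsup : ∀ p : I × ℂ, (m'.v (p.1, p.2*ε) ≠ 0 ∨ m'.w (p.1, p.2*ε) ≠ 0) → p ∈ T := by
    rintro ⟨p₁, p₂⟩ hp
    have h1 : (p₁, p₂*ε) ∈ m'.v.support ∪ m'.w.support := by
      rcases hp with h | h
      · exact Finset.mem_union_left _ (Finsupp.mem_support_iff.2 h)
      · exact Finset.mem_union_right _ (Finsupp.mem_support_iff.2 h)
    rw [hT]
    refine Finset.mem_union_left _ (Finset.mem_union_left _ (Finset.mem_image.2 ⟨_, h1, ?_⟩))
    simp [mul_inv_cancel_right₀ hε]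
  -- summands
  set f₁ : I × ℂ → ℤ := fun p => (m'.v (p.1, p.2 * ε) : ℤ) * uq A ε m' p.1 p.2
    + (m'.w (p.1, p.2 * ε) : ℤ) * (m'.v p : ℤ) with hf₁
  set f₂ : I × ℂ → ℤ := fun p => (M.v (p.1, p.2 * ε) : ℤ) * uq A ε M p.1 p.2
    + (M.w (p.1, p.2 * ε) : ℤ) * (M.v p : ℤ) with hf₂
  have hd1 : dd A ε m' m' = ∑ p ∈ T, f₁ p := by
    rw [dd]
    refine finsum_eq_sum_of_support_subset _ ?_
    intro p hp
    apply hsup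
    by_contra hc
    push_neg at hc
    simp only [Function.mem_support, hc.1, hc.2, Nat.cast_zero, zero_mul, add_zero, ne_eq,
      not_true_eq_false] at hp
  have hMv : ∀ q : I × ℂ, (M.v q : ℤ) = (m'.v q : ℤ) + (if (i, b*ε) = q then 1 else 0) := by
    intro q
    simp [hMdef, hVdef, Vmon, Finsupp.single_apply]
  have hMw : ∀ q : I × ℂ, (M.w q : ℤ) = (m'.w q : ℤ) := by
    intro q
    simp [hMdef, hVdef, Vmon]
  have hd2 : dd A ε M M = ∑ p ∈ T, f₂ p := by
    rw [dd]
    refine finsum_eq_sum_of_support_subset _ ?_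
    rintro ⟨p₁, p₂⟩ hp
    by_cases hc : m'.v (p₁, p₂*ε) ≠ 0 ∨ m'.w (p₁, p₂*ε) ≠ 0
    · exact hsup _ hc
    push_neg at hc
    -- then M.v (p₁,p₂*ε) ≠ 0 forces (p₁,p₂*ε) = (i,b*ε)
    by_cases hd : (i, b*ε) = (p₁, p₂*ε)
    · rw [Prod.mk.injEq] at hd
      obtain ⟨he1, he2⟩ := hd
      have hpb : p₂ = b := (mul_right_cancel₀ hε he2).symm
      have : (p₁, p₂) = (i, b) := by rw [hpb, ← he1]
      rw [this]; exact hib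
    · exfalso
      simp only [Function.mem_support] at hp
      have h1 : (M.v (p₁, p₂*ε) : ℤ) = 0 := by
        rw [hMv ((p₁, p₂*ε) : I × ℂ), hc.1, if_neg hd]; simp
      have h2 : (M.w (p₁, p₂*ε) : ℤ) = 0 := by rw [hMw, hc.2]; simp
      exact hp (by rw [h1, h2]; ring)
  rw [hd2, hd1, ← sub_eq_zero, ← Finset.sum_sub_distrib]
  have hinv : ∀ x : ℂ, x * ε⁻¹ = b*ε ↔ x = b*ε*ε := fun x => mul_inv_eq_iff_eq_mul₀ hε
  have key : ∀ p ∈ T, f₂ p - f₁ p =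
      (if p = (i, b) then uq A ε M i b else 0)
      + (∑ j : I, if p = (j, b*ε) then (if A j i = -1 then (m'.v (j, b*ε*ε) : ℤ) else 0) else 0)
      + (if p = (i, b*ε) then (m'.w (i, b*ε*ε) : ℤ) else 0)
      - (if p = (i, b*ε*ε) then (m'.v (i, b*ε*ε*ε) : ℤ) else 0)
      - (if p = (i, b) then (m'.v (i, b*ε) : ℤ) else 0) := by
    rintro ⟨p₁, p₂⟩ _
    have expand : f₂ (p₁,p₂) - f₁ (p₁,p₂) =
        (m'.v (p₁, p₂*ε) : ℤ) * uq A ε V p₁ p₂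
        + (if (i, b*ε) = (p₁, p₂*ε) then 1 else 0) * uq A ε M p₁ p₂
        + (m'.w (p₁, p₂*ε) : ℤ) * (if (i, b*ε) = (p₁, p₂) then 1 else 0) := by
      simp only [hf₂, hf₁]
      rw [hMv (p₁, p₂*ε), hMv (p₁, p₂), hMw (p₁, p₂*ε)]
      have huu : uq A ε M p₁ p₂ = uq A ε m' p₁ p₂ + uq A ε V p₁ p₂ := by
        rw [hMdef]; exact uq_mul A ε m' V p₁ p₂
      rw [huu]
      ring
    have cond1 : ((i, b*ε) = (p₁, p₂ * ε⁻¹)) ↔ ((p₁, p₂) = ((i : I), b*ε*ε)) := by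
      rw [Prod.mk.injEq, Prod.mk.injEq]
      constructor
      · rintro ⟨ha, hb⟩; exact ⟨ha.symm, (hinv p₂).1 hb.symm⟩
      · rintro ⟨ha, hb⟩; exact ⟨ha.symm, ((hinv p₂).2 hb).symm⟩
    have cond2 : ((i, b*ε) = (p₁, p₂ * ε)) ↔ ((p₁, p₂) = ((i : I), b)) := by
      rw [Prod.mk.injEq, Prod.mk.injEq]
      constructor
      · rintro ⟨ha, hb⟩; exact ⟨ha.symm, (mul_right_cancel₀ hε hb).symm⟩
      · rintro ⟨ha, hb⟩; exact ⟨ha.symm, by rw [hb]⟩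
    have cond4 : ((i, b*ε) = ((p₁ : I), p₂)) ↔ ((p₁, p₂) = ((i : I), b*ε)) := eq_comm
    have h1 : (m'.v (p₁, p₂*ε) : ℤ) * (if (i, b*ε) = (p₁, p₂ * ε⁻¹) then 1 else 0)
        = (if (p₁, p₂) = ((i : I), b*ε*ε) then (m'.v (i, b*ε*ε*ε) : ℤ) else 0) := by
      rw [if_congr cond1 rfl rfl, mul_ite, mul_one, mul_zero]
      split_ifs with h
      · rw [Prod.mk.injEq] at h; rw [h.1, h.2]
      · rfl
    have h2 : (m'.v (p₁, p₂*ε) : ℤ) * (if (i, b*ε) = (p₁, p₂ * ε) then 1 else 0)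
        = (if (p₁, p₂) = ((i : I), b) then (m'.v (i, b*ε) : ℤ) else 0) := by
      rw [if_congr cond2 rfl rfl, mul_ite, mul_one, mul_zero]
      split_ifs with h
      · rw [Prod.mk.injEq] at h; rw [h.1, h.2]
      · rfl
    have h2' : (if (i, b*ε) = (p₁, p₂ * ε) then (1:ℤ) else 0) * uq A ε M p₁ p₂
        = (if (p₁, p₂) = ((i : I), b) then uq A ε M i b else 0) := by
      rw [if_congr cond2 rfl rfl, ite_mul, one_mul, zero_mul]
      split_ifs with h
      · rw [Prod.mk.injEq] at h; rw [h.1, h.2]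
      · rfl
    have h4 : (m'.w (p₁, p₂*ε) : ℤ) * (if (i, b*ε) = ((p₁ : I), p₂) then 1 else 0)
        = (if (p₁, p₂) = ((i : I), b*ε) then (m'.w (i, b*ε*ε) : ℤ) else 0) := by
      rw [if_congr cond4 rfl rfl, mul_ite, mul_one, mul_zero]
      split_ifs with h
      · rw [Prod.mk.injEq] at h; rw [h.1, h.2]
      · rfl
    have h3 : (m'.v (p₁, p₂*ε) : ℤ)
          * (∑ j : I, if A p₁ j = -1 then (if (i, b*ε) = (j, p₂) then (1:ℤ) else 0) else 0)
        = ∑ j : I, if (p₁, p₂) = ((j : I), b*ε) then (if A j i = -1 then (m'.v (j, b*ε*ε) : ℤ) else 0) else 0 := by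
      by_cases hp2 : p₂ = b*ε
      · subst hp2
        have hL : (∑ j : I, if A p₁ j = -1 then (if (i, b*ε) = ((j : I), b*ε) then (1:ℤ) else 0) else 0)
            = if A p₁ i = -1 then 1 else 0 := by
          rw [Finset.sum_eq_single_of_mem i (Finset.mem_univ i)]
          · simp
          · intro j _ hj
            split_ifs with hA hc
            · rw [Prod.mk.injEq] at hc; exact absurd hc.1.symm hj
            · rfl
            · rfl
        have hR : (∑ j : I, if ((p₁ : I), b*ε) = ((j : I), b*ε) then (if A j i = -1 then (m'.v (j, b*ε*ε) : ℤ) else 0) else 0)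
            = if A p₁ i = -1 then (m'.v (p₁, b*ε*ε) : ℤ) else 0 := by
          rw [Finset.sum_eq_single_of_mem p₁ (Finset.mem_univ p₁)]
          · simp
          · intro j _ hj
            rw [if_neg]
            intro hc; rw [Prod.mk.injEq] at hc; exact hj hc.1.symm
        rw [hL, hR, mul_ite, mul_one, mul_zero]
      · have hL : (∑ j : I, if A p₁ j = -1 then (if (i, b*ε) = ((j : I), p₂) then (1:ℤ) else 0) else 0) = 0 :=
          Finset.sum_eq_zero fun j _ => by
            split_ifs with hA hc
            · rw [Prod.mk.injEq] at hc; exact absurd hc.2.symm hp2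
            · rfl
            · rfl
        have hR : (∑ j : I, if ((p₁ : I), p₂) = ((j : I), b*ε) then (if A j i = -1 then (m'.v (j, b*ε*ε) : ℤ) else 0) else 0) = 0 :=
          Finset.sum_eq_zero fun j _ => by
            rw [if_neg]
            intro hc; rw [Prod.mk.injEq] at hc; exact hp2 hc.2
        rw [hL, hR, mul_zero]
    rw [expand, uq_V A ε i b p₁ p₂]
    linear_combination (-1 : ℤ) * h1 - h2 + h2' + h3 + h4
  rw [Finset.sum_congr rfl key]
  rw [Finset.sum_sub_distrib, Finset.sum_sub_distrib, Finset.sum_add_distrib, Finset.sum_add_distrib]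
  have hs1 : (∑ p ∈ T, if p = ((i : I), b) then uq A ε M i b else 0) = uq A ε M i b := by
    rw [Finset.sum_ite_eq' T ((i : I), b) (fun _ => uq A ε M i b), if_pos hib]
  have hs2 : (∑ p ∈ T, if p = ((i : I), b*ε) then (m'.w (i, b*ε*ε) : ℤ) else 0) = (m'.w (i, b*ε*ε) : ℤ) := by
    rw [Finset.sum_ite_eq' T ((i : I), b*ε) (fun _ => (m'.w (i, b*ε*ε) : ℤ)), if_pos (hmemT i)]
  have hs3 : (∑ p ∈ T, if p = ((i : I), b*ε*ε) then (m'.v (i, b*ε*ε*ε) : ℤ) else 0) = (m'.v (i, b*ε*ε*ε) : ℤ) := by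
    rw [Finset.sum_ite_eq' T ((i : I), b*ε*ε) (fun _ => (m'.v (i, b*ε*ε*ε) : ℤ)), if_pos hib2]
  have hs5 : (∑ p ∈ T, if p = ((i : I), b) then (m'.v (i, b*ε) : ℤ) else 0) = (m'.v (i, b*ε) : ℤ) := by
    rw [Finset.sum_ite_eq' T ((i : I), b) (fun _ => (m'.v (i, b*ε) : ℤ)), if_pos hib]
  have hs4 : (∑ p ∈ T, ∑ j : I, if p = ((j : I), b*ε) then (if A j i = -1 then (m'.v (j, b*ε*ε) : ℤ) else 0) else 0)
      = ∑ j : I, (if A i j = -1 then (m'.v (j, b*ε*ε) : ℤ) else 0) := by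
    rw [Finset.sum_comm]
    refine Finset.sum_congr rfl fun j _ => ?_
    rw [Finset.sum_ite_eq' T ((j : I), b*ε) (fun _ => if A j i = -1 then (m'.v (j, b*ε*ε) : ℤ) else 0),
      if_pos (hmemT j), hsymm j i]
  rw [hs1, hs2, hs3, hs4, hs5]
  have huqM : uq A ε M i b = 1 + uq A ε V i b := by
    rw [hMdef, uq_mul, hm'1]
  have huqV : uq A ε V i b = -(if (i, b*ε) = ((i : I), b * ε⁻¹) then 1 else 0) - 1 := by
    rw [hVdef, uq_V A ε i b i b, if_pos rfl]
    have hz : (∑ j : I, if A i j = -1 then (if (i, b*ε) = ((j : I), b) then (1:ℤ) else 0) else 0) = 0 :=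
      Finset.sum_eq_zero fun j _ => by
        split_ifs with hA hc
        · exfalso
          rw [Prod.mk.injEq] at hc
          rw [← hc.1, hdiag] at hA
          exact absurd hA (by decide)
        · rfl
        · rfl
    rw [hz]; ring
  have hexp : uq A ε m' i (b*ε*ε) = (m'.w (i, b*ε*ε) : ℤ) - (m'.v (i, b*ε) : ℤ)
      - (m'.v (i, b*ε*ε*ε) : ℤ) + ∑ j : I, (if A i j = -1 then (m'.v (j, b*ε*ε) : ℤ) else 0) := by
    rw [uq, mul_inv_cancel_right₀ hε]
  have hfin : uq A ε m' i (b*ε*ε) = (if (i, b*ε) = ((i : I), b * ε⁻¹) then 1 else 0) := by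
    by_cases hbe : b*ε*ε = b
    · have hc : b * ε⁻¹ = b * ε := by
        conv_lhs => rw [← hbe]
        rw [mul_inv_cancel_right₀ hε]
      rw [if_pos (by rw [hc]), hbe, hm'1]
    · rw [if_neg, hm'0 _ hbe]
      intro hc; rw [Prod.mk.injEq] at hc
      apply hbe
      have h2 := congrArg (· * ε) hc.2
      simpa [mul_assoc, inv_mul_cancel₀ hε] using h2
  linear_combination huqM + huqV - hexp + hfin

lemma mono_mul_mono {I : Type} (k k' : ℤ) (m m' : Mon I) :
    (mono k m : FRing I) * mono k' m' = mono (k + k') (m * m') := by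
  rw [mono, mono, mono, MonoidAlgebra.single_mul_single]
  norm_num

lemma emb_T {I : Type} (k : ℤ) : (emb (T k) : FRing I) = mono k 1 := by
  rw [emb, mono]
  show (Finsupp.single k (1:ℤ)).sum _ = _
  exact Finsupp.sum_single_index (by simp)

lemma emb_one {I : Type} : (emb (1 : LaurentPolynomial ℤ) : FRing I) = 1 := by
  have : (1 : LaurentPolynomial ℤ) = T 0 := by simp [T_zero]
  rw [this, emb_T, mono, MonoidAlgebra.one_def]
  rfl

lemma mono_zero_one {I : Type} : (mono 0 (1 : Mon I) : FRing I) = 1 := by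
  rw [mono, MonoidAlgebra.one_def]; rfl

lemma bar_add {I : Type} (D : Mon I → Mon I → ℤ) (f g : FRing I) :
    barD D (f + g) = barD D f + barD D g := by
  rw [barD, barD, barD, MonoidAlgebra.coeff_add]
  exact Finsupp.sum_add_index' (fun a => by simp) (fun a b₁ b₂ => by
    classical exact MonoidAlgebra.single_add _ _ _)

lemma bar_mono {I : Type} (D : Mon I → Mon I → ℤ) (m : Mon I) :
    barD D (mono 0 m) = emb (T (2 * D m m)) * mono 0 m := by
  rw [emb_T, mono_mul_mono, add_zero, one_mul, barD]
  rw [show (mono 0 m : FRing I) = MonoidAlgebra.single (Multiplicative.ofAdd (0:ℤ), m) 1 from rfl]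
  rw [MonoidAlgebra.coeff_single, Finsupp.sum_single_index (by simp)]
  simp only [toAdd_ofAdd, neg_zero, zero_add]
  rfl

lemma Ei_eval {I : Type} [Fintype I] (A : I → I → ℤ) (ε : ℂ)
    (B : ℕ → ℕ → LaurentPolynomial ℤ) (hB1 : B 1 0 = 1) (hB2 : B 1 1 = 1)
    (i : I) (b : ℂ) (m' : Mon I) (h1 : uq A ε m' i b = 1) :
    Ei A ε B i m' {b} = mono 0 m' + mono 0 (m' * Vmon i (b*ε)) := by
  rw [Ei, Finset.prod_singleton, h1]
  simp only [Int.toNat_one]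
  rw [Finset.sum_range_succ, Finset.sum_range_one]
  simp only [Nat.cast_zero, Nat.cast_one, zero_mul, sub_self, mul_zero, sub_zero, T_zero,
    one_mul, hB1, hB2, pow_zero, pow_one, emb_one, mono_zero_one, mul_one]
  rw [mul_add, mul_one, mono_mul_mono, add_zero]

end BarOfFAux

/-- for `f = m'(1+V_{i,bε})` with `m'` a monomial (no powers of `t`)
satisfying `u_{i,b}(m') = 1` and `u_{i,c}(m') = 0` for `c ≠ b`, the bar involution
satisfies `bar f = t^{2d(m',m')} f`; in particular `bar f` lies in the span `K̂_{t,i}`. -/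
theorem bar_of_f {I : Type} [Fintype I] (A : I → I → ℤ)
    (hsymm : ∀ i j, A i j = A j i) (hdiag : ∀ i, A i i = 2)
    (hoff : ∀ i j, i ≠ j → A i j = 0 ∨ A i j = -1)
    (ε : ℂ) (hε : ε ≠ 0)
    (B : ℕ → ℕ → LaurentPolynomial ℤ)
    (hB : ∀ N r : ℕ, r ≤ N → qfact r * qfact (N - r) * B N r = qfact N)
    (hB1 : B 1 0 = 1) (hB2 : B 1 1 = 1)
    (i : I) (b : ℂ) (m' : Mon I)
    (hm'1 : uq A ε m' i b = 1) (hm'0 : ∀ c : ℂ, c ≠ b → uq A ε m' i c = 0) :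
    barD (dd A ε) (mono 0 m' + mono 0 (m' * Vmon i (b * ε)))
      = emb (T (2 * dd A ε m' m')) * (mono 0 m' + mono 0 (m' * Vmon i (b * ε))) ∧
    barD (dd A ε) (mono 0 m' + mono 0 (m' * Vmon i (b * ε))) ∈ Khat A ε B i := by
  have hdd := dd_key A hsymm hdiag ε hε i b m' hm'1 hm'0
  have h1 : barD (dd A ε) (mono 0 m' + mono 0 (m' * Vmon i (b * ε)))
      = emb (T (2 * dd A ε m' m')) * (mono 0 m' + mono 0 (m' * Vmon i (b * ε))) := by
    rw [bar_add, bar_mono, bar_mono, hdd, mul_add]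
  refine ⟨h1, ?_⟩
  rw [h1]
  apply Submodule.subset_span
  refine ⟨2 * dd A ε m' m', m', {b}, ?_, ?_, ?_⟩
  · intro a
    by_cases ha : a = b
    · rw [ha, hm'1]; norm_num
    · exact le_of_eq (hm'0 a ha).symm
  · intro a ha
    exact hm'0 a (by simpa using ha)
  · rw [Ei_eval A ε B hB1 hB2 i b m' hm'1]
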